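/- arXiv:1609.08853 — 2 statements merged into one kernel-verified Lean document; each statement's English description precedes it below -/
import Mathlib

section
/- Let V_h be the space of piecewise polynomials of degree ≤ k on a partition 0 = x_{1/2} < x_{3/2} < ... < x_{N+1/2} = 1 (with no continuity across interfaces), θ ∈ [0,1] with θ ≠ 1/2, and define the generalized trace ŵ_{j+1/2} = θ w(x_{j+1/2}⁻) + (1−θ) w(x_{j+1/2}⁺) (indices periodic mod N). For each continuous piecewise-H¹ function u, there exists a unique Pu ∈ V_h such that ∫_{I_j} (Pu − u)·w dx = 0 for all polynomials w of degree ≤ k−1 on each cell I_j, and (Pu)^_{j+1/2} = û_{j+1/2} for every j. -/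
open Polynomial intervalIntegral

/-!
Record a candidate `Pu` through its cellwise moments against `1, y, …, y^(k-1)` and its
generalized traces: this is a linear map between spaces of the same dimension `N (k + 1)`, so it
suffices to show that it is injective. If `q` has degree `≤ k` and is orthogonal on `[a, b]` to
all polynomials of degree `< k`, then `q(a) = (-1)^k q(b)`, because reflecting the cell preserves
this line of polynomials and acts on leading coefficients by `(-1)^k`; moreover `q(b) = 0` forces
`q = 0`. For an element of the kernel the trace conditions thus say that the right-end values
`e_j` satisfy `θ e_j + (1 - θ)(-1)^k e_{j+1} = 0` cyclically; as `|θ| ≠ |1 - θ|`, looking at a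
maximum of `|e|` gives `e = 0`.
-/

open Set

theorem Polynomial.eq_zero_of_integral_eval_sq_mul_eq_zero {a b : ℝ} (hab : a < b)
    {g : ℝ → ℝ} (hg : Continuous g) (hg_nonneg : ∀ y ∈ Ioc a b, 0 ≤ g y)
    (hg_pos : ∀ y ∈ Ioo a b, 0 < g y) {r : ℝ[X]}
    (h : ∫ y in a..b, r.eval y ^ 2 * g y = 0) : r = 0 := by
  by_contra hr
  obtain ⟨c, hc, hrc⟩ : ∃ c ∈ Ioo a b, r.eval c ≠ 0 := by
    by_contra! hroots
    exact hr (eq_zero_of_infinite_isRoot r ((Ioo_infinite hab).mono hroots))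
  refine (intervalIntegral.integral_pos hab ((r.continuous.pow 2).mul hg).continuousOn
    (fun y hy => mul_nonneg (sq_nonneg _) (hg_nonneg y hy))
    ⟨c, Ioo_subset_Icc_self hc, mul_pos (sq_pos_iff.2 hrc) (hg_pos c hc)⟩).ne' h

def OrthogonalToDegreeLT (a b : ℝ) (k : ℕ) (f : ℝ → ℝ) : Prop :=
  ∀ w : ℝ[X], w.degree < k → ∫ y in a..b, f y * w.eval y = 0

noncomputable def intervalMoments (a b : ℝ) (k : ℕ) (f : ℝ → ℝ) : Fin k → ℝ :=
  fun m => ∫ y in a..b, f y * y ^ (m : ℕ)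

section Cell

variable {a b : ℝ} {k : ℕ} {f g : ℝ → ℝ}

theorem intervalMoments_add (hf : Continuous f) (hg : Continuous g) :
    intervalMoments a b k (f + g) = intervalMoments a b k f + intervalMoments a b k g := by
  funext m
  simp only [intervalMoments, Pi.add_apply, add_mul]
  exact integral_add ((hf.mul (continuous_pow _)).intervalIntegrable _ _)
    ((hg.mul (continuous_pow _)).intervalIntegrable _ _)

theorem intervalMoments_sub (hf : Continuous f) (hg : Continuous g) :
    intervalMoments a b k (f - g) = intervalMoments a b k f - intervalMoments a b k g := by
  funext m
  simp only [intervalMoments, Pi.sub_apply, sub_mul]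
  exact integral_sub ((hf.mul (continuous_pow _)).intervalIntegrable _ _)
    ((hg.mul (continuous_pow _)).intervalIntegrable _ _)

theorem intervalMoments_const_smul (c : ℝ) :
    intervalMoments a b k (c • f) = c • intervalMoments a b k f := by
  funext m
  simp only [intervalMoments, Pi.smul_apply, smul_eq_mul, mul_assoc, integral_const_mul]

theorem orthogonalToDegreeLT_iff_intervalMoments_eq_zero (hf : Continuous f) :
    OrthogonalToDegreeLT a b k f ↔ intervalMoments a b k f = 0 := by
  refine ⟨fun h => funext fun m => by simpa [intervalMoments] using h (X ^ (m : ℕ)) (by simp),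
    fun h w hw => ?_⟩
  obtain rfl | hw0 := eq_or_ne w 0
  · simp
  have hwk : w.natDegree < k := (natDegree_lt_iff_degree_lt hw0).2 hw
  have hmoment (i : ℕ) (hi : i < k) : ∫ y in a..b, f y * y ^ i = 0 :=
    congrFun h ⟨i, hi⟩
  calc ∫ y in a..b, f y * w.eval y
      = ∫ y in a..b, ∑ i ∈ Finset.range k, w.coeff i * (f y * y ^ i) := by
        refine integral_congr fun y _ => ?_
        simp only [eval_eq_sum_range' hwk y, Finset.mul_sum]
        exact Finset.sum_congr rfl fun i _ => by ring
    _ = ∑ i ∈ Finset.range k, w.coeff i * ∫ y in a..b, f y * y ^ i := by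
        rw [integral_finsetSum fun i _ =>
          (by fun_prop : Continuous fun y => w.coeff i * (f y * y ^ i)).intervalIntegrable a b]
        simp_rw [integral_const_mul]
    _ = 0 := Finset.sum_eq_zero fun i hi => by rw [hmoment i (Finset.mem_range.1 hi), mul_zero]

namespace OrthogonalToDegreeLT

theorem sub (hf : Continuous f) (hg : Continuous g) (hfo : OrthogonalToDegreeLT a b k f)
    (hgo : OrthogonalToDegreeLT a b k g) : OrthogonalToDegreeLT a b k (f - g) := by
  intro w hw
  simp only [Pi.sub_apply, sub_mul]
  rw [integral_sub (f := fun y => f y * w.eval y) (g := fun y => g y * w.eval y)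
    ((hf.mul w.continuous).intervalIntegrable _ _) ((hg.mul w.continuous).intervalIntegrable _ _),
    hfo w hw, hgo w hw, sub_zero]

theorem const_smul (c : ℝ) (h : OrthogonalToDegreeLT a b k f) :
    OrthogonalToDegreeLT a b k (c • f) := by
  intro w hw
  simp only [Pi.smul_apply, smul_eq_mul, mul_assoc, integral_const_mul, h w hw, mul_zero]

theorem reflect (h : OrthogonalToDegreeLT a b k f) :
    OrthogonalToDegreeLT a b k (fun y => f (a + b - y)) := by
  intro w hw
  set w' := w.comp (C (a + b) - X)
  have hw' : w'.degree < k := by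
    obtain rfl | hw0 := eq_or_ne w 0
    · simp [w']
    have hL : (C (a + b) - X : ℝ[X]).natDegree = 1 := by compute_degree!
    refine degree_le_natDegree.trans_lt ?_
    rw [natDegree_comp, hL, mul_one]
    exact_mod_cast (natDegree_lt_iff_degree_lt hw0).2 hw
  calc ∫ y in a..b, f (a + b - y) * w.eval y
      = ∫ y in a..b, (fun t => f t * w'.eval t) (a + b - y) := by simp [w']
    _ = 0 := by
        rw [integral_comp_sub_left (fun t => f t * w'.eval t), add_sub_cancel_left,
          add_sub_cancel_right, h w' hw']

theorem eq_zero_of_degree_lt (hab : a < b) {q : ℝ[X]} (hq : q.degree < k)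
    (h : OrthogonalToDegreeLT a b k q.eval) : q = 0 :=
  eq_zero_of_integral_eval_sq_mul_eq_zero hab continuous_const (fun _ _ => zero_le_one)
    (fun _ _ => one_pos) (by simpa [sq] using h q hq)

theorem eq_zero_of_eval_right_eq_zero (hab : a < b) {q : ℝ[X]} (hq : q.degree ≤ k)
    (h : OrthogonalToDegreeLT a b k q.eval) (hqb : q.eval b = 0) : q = 0 := by
  obtain ⟨r, rfl⟩ := dvd_iff_isRoot.2 hqb
  obtain rfl | hr0 := eq_or_ne r 0
  · simp
  have hr : r.degree < k := by
    rw [degree_mul, degree_X_sub_C, degree_eq_natDegree hr0] at hq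
    rw [degree_eq_natDegree hr0]
    have : 1 + r.natDegree ≤ k := by exact_mod_cast hq
    exact_mod_cast (by omega : r.natDegree < k)
  -- `q = (X - b) r` paired with `r` is `-∫ r² (b - y)`, and `b - y > 0` inside the cell.
  have hint : ∫ y in a..b, r.eval y ^ 2 * (b - y) = 0 := by
    have := h r hr
    simp only [eval_mul, eval_sub, eval_X, eval_C] at this
    rw [← neg_eq_zero, ← this, ← integral_neg]
    exact integral_congr fun y _ => by ring
  rw [eq_zero_of_integral_eval_sq_mul_eq_zero hab (continuous_const.sub continuous_id)
    (fun y hy => sub_nonneg.2 hy.2) (fun y hy => sub_pos.2 hy.2) hint, mul_zero]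

theorem eval_left_eq (hab : a < b) {q : ℝ[X]} (hq : q.degree ≤ k)
    (h : OrthogonalToDegreeLT a b k q.eval) : q.eval a = (-1) ^ k * q.eval b := by
  obtain hlt | rfl := (natDegree_le_of_degree_le hq).lt_or_eq
  · rw [h.eq_zero_of_degree_lt hab (degree_le_natDegree.trans_lt (by exact_mod_cast hlt))]
    simp
  obtain rfl | hq0 := eq_or_ne q 0
  · simp
  -- `q ∘ (a + b - ·) - (-1) ^ deg q • q` is still orthogonal but has lower degree.
  set n := q.natDegree
  set L : ℝ[X] := C (a + b) - X
  have hL_eq : L = -(X - C (a + b)) := by ring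
  have hL : L.natDegree = 1 := by rw [hL_eq, natDegree_neg, natDegree_X_sub_C]
  have hLlc : L.leadingCoeff = -1 := by rw [hL_eq, leadingCoeff_neg, leadingCoeff_X_sub_C]
  have hlc : (q.comp L).leadingCoeff = (C ((-1) ^ n) * q).leadingCoeff := by
    rw [leadingCoeff_comp (by rw [hL]; exact one_ne_zero), hLlc, leadingCoeff_mul, leadingCoeff_C,
      mul_comm]
  have hqL0 : q.comp L ≠ 0 := by
    rw [← leadingCoeff_ne_zero, hlc, leadingCoeff_mul, leadingCoeff_C]
    exact mul_ne_zero (pow_ne_zero _ (by norm_num)) (leadingCoeff_ne_zero.2 hq0)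
  have hqL : (q.comp L).degree = n := by
    rw [degree_eq_natDegree hqL0, natDegree_comp, hL, mul_one]
  have hdeg : (q.comp L - C ((-1) ^ n) * q).degree < (n : WithBot ℕ) := by
    refine hqL ▸ degree_sub_lt_left ?_ hqL0 hlc
    rw [hqL, degree_C_mul (pow_ne_zero _ (by norm_num)), degree_eq_natDegree hq0]
  have horth : OrthogonalToDegreeLT a b n (q.comp L - C ((-1) ^ n) * q).eval := by
    convert h.reflect.sub (by fun_prop) (by fun_prop) (h.const_smul ((-1) ^ n)) using 1
    funext y
    simp [L]
  have := congrArg (eval b) (eq_zero_of_degree_lt hab hdeg horth)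
  simp only [eval_sub, eval_comp, eval_mul, eval_C, eval_X, eval_zero, L] at this
  rw [add_sub_cancel_right] at this
  linarith

end OrthogonalToDegreeLT

end Cell

theorem Polynomial.mem_degreeLT_add_one_iff {k : ℕ} {q : ℝ[X]} :
    q ∈ degreeLT ℝ (k + 1) ↔ q.degree ≤ k := by
  rw [degreeLT_succ_eq_degreeLE, mem_degreeLE]

theorem eq_zero_of_forall_mul_add_mul_shift_eq_zero {G : Type*} [AddGroup G] [Finite G] (g : G)
    {α β : ℝ} (hαβ : |α| ≠ |β|) {e : G → ℝ} (h : ∀ j, α * e j + β * e (j + g) = 0) : e = 0 := by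
  have habs (j : G) : |α| * |e j| = |β| * |e (j + g)| := by
    rw [← abs_mul, ← abs_mul, eq_neg_of_add_eq_zero_left (h j), abs_neg]
  obtain ⟨j₀, hj₀⟩ := Finite.exists_max fun j => |e j|
  have hmax : |e j₀| = 0 := by
    rcases hαβ.lt_or_gt with hlt | hgt
    · have := habs (j₀ - g)
      rw [sub_add_cancel] at this
      nlinarith [hj₀ (j₀ - g), abs_nonneg α, abs_nonneg (e j₀)]
    · nlinarith [habs j₀, hj₀ (j₀ + g), abs_nonneg β, abs_nonneg (e j₀)]
  funext j
  exact abs_nonpos_iff.1 (hmax ▸ hj₀ j)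

section GaussRadau

variable {N : ℕ} [NeZero N] (k : ℕ) (θ : ℝ) (a b : Fin N → ℝ)

/-- Cell `j` is `[a j, b j]`; the trace at its right end couples it with cell `j + 1`, indices
taken mod `N`. -/
noncomputable def gaussRadauData (F : Fin N → ℝ → ℝ) : (Fin N → Fin k → ℝ) × (Fin N → ℝ) :=
  (fun j => intervalMoments (a j) (b j) k (F j),
    fun j => θ * F j (b j) + (1 - θ) * F (j + 1) (a (j + 1)))

noncomputable def gaussRadauMap :
    (Fin N → degreeLT ℝ (k + 1)) →ₗ[ℝ] (Fin N → Fin k → ℝ) × (Fin N → ℝ) where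
  toFun p := gaussRadauData k θ a b fun j => (p j : ℝ[X]).eval
  map_add' p q := by
    refine Prod.ext (funext fun j => ?_) (funext fun j => ?_)
    · simp only [gaussRadauData, Prod.fst_add, Pi.add_apply, Submodule.coe_add, eval_add]
      exact intervalMoments_add (p j : ℝ[X]).continuous (q j : ℝ[X]).continuous
    · simp only [gaussRadauData, Prod.snd_add, Pi.add_apply, Submodule.coe_add, eval_add]
      ring
  map_smul' c p := by
    refine Prod.ext (funext fun j => ?_) (funext fun j => ?_)
    · simp only [gaussRadauData, Prod.smul_fst, Pi.smul_apply, Submodule.coe_smul, eval_smul,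
        RingHom.id_apply]
      exact intervalMoments_const_smul c
    · simp only [gaussRadauData, Prod.smul_snd, Pi.smul_apply, Submodule.coe_smul, eval_smul,
        RingHom.id_apply, smul_eq_mul]
      ring

variable {k θ a b}

theorem gaussRadauData_eq_iff {F G : Fin N → ℝ → ℝ} (hF : ∀ j, Continuous (F j))
    (hG : ∀ j, Continuous (G j)) :
    gaussRadauData k θ a b F = gaussRadauData k θ a b G ↔
      (∀ j, OrthogonalToDegreeLT (a j) (b j) k (F j - G j)) ∧
      ∀ j, θ * F j (b j) + (1 - θ) * F (j + 1) (a (j + 1))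
        = θ * G j (b j) + (1 - θ) * G (j + 1) (a (j + 1)) := by
  simp only [gaussRadauData, Prod.mk.injEq, funext_iff,
    orthogonalToDegreeLT_iff_intervalMoments_eq_zero ((hF _).sub (hG _)),
    intervalMoments_sub (hF _) (hG _), sub_eq_zero]

theorem gaussRadauMap_injective (hab : ∀ j, a j < b j) (hθ : θ ≠ 1 / 2) :
    Function.Injective (gaussRadauMap k θ a b) := by
  rw [← LinearMap.ker_eq_bot, LinearMap.ker_eq_bot']
  intro p hp
  have hdeg (j : Fin N) : (p j : ℝ[X]).degree ≤ k := mem_degreeLT_add_one_iff.1 (p j).2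
  have horth (j : Fin N) : OrthogonalToDegreeLT (a j) (b j) k (p j : ℝ[X]).eval :=
    (orthogonalToDegreeLT_iff_intervalMoments_eq_zero (p j : ℝ[X]).continuous).2
      (congrFun (congrArg Prod.fst hp) j)
  have htrace (j : Fin N) : θ * (p j : ℝ[X]).eval (b j)
      + (1 - θ) * (-1) ^ k * (p (j + 1) : ℝ[X]).eval (b (j + 1)) = 0 := by
    rw [mul_assoc, ← (horth (j + 1)).eval_left_eq (hab (j + 1)) (hdeg (j + 1))]
    exact congrFun (congrArg Prod.snd hp) j
  have hweights : |θ| ≠ |(1 - θ) * (-1) ^ k| := by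
    rw [abs_mul, abs_pow, abs_neg, abs_one, one_pow, mul_one, Ne, abs_eq_abs]
    rintro (h | h)
    · exact hθ (by linarith)
    · linarith
  have hright := eq_zero_of_forall_mul_add_mul_shift_eq_zero 1 hweights
    (e := fun j => (p j : ℝ[X]).eval (b j)) htrace
  funext j
  exact Subtype.ext ((horth j).eq_zero_of_eval_right_eq_zero (hab j) (hdeg j) (congrFun hright j))

theorem gaussRadauMap_bijective (hab : ∀ j, a j < b j) (hθ : θ ≠ 1 / 2) :
    Function.Bijective (gaussRadauMap k θ a b) := by
  -- `N (k + 1)` unknown coefficients against `N k` moment and `N` trace conditions.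
  have hdim : Module.finrank ℝ (Fin N → degreeLT ℝ (k + 1))
      = Module.finrank ℝ ((Fin N → Fin k → ℝ) × (Fin N → ℝ)) := by
    have hcell : Module.finrank ℝ (degreeLT ℝ (k + 1)) = k + 1 := by
      simp [(degreeLTEquiv ℝ (k + 1)).finrank_eq]
    simp only [Module.finrank_prod, Module.finrank_pi_fintype, hcell, Module.finrank_self,
      Fintype.card_fin, Finset.sum_const, Finset.card_univ, smul_eq_mul]
    ring
  have hinj : Function.Injective (gaussRadauMap k θ a b) := gaussRadauMap_injective hab hθ
  exact ⟨hinj, (LinearMap.injective_iff_surjective_of_finrank_eq_finrank hdim).1 hinj⟩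

end GaussRadau

theorem generalized_gauss_radau_projection_exists_unique_general
    (N k : ℕ) [NeZero N] (θ : ℝ) (hθ : θ ≠ 1 / 2)
    (x : Fin (N + 1) → ℝ) (hx : StrictMono x)
    (u : ℝ → ℝ) (hu : Continuous u) :
    ∃! p : Fin N → Polynomial ℝ,
      (∀ j : Fin N, (p j).degree ≤ (k : ℕ)) ∧
      (∀ j : Fin N, ∀ w : Polynomial ℝ, w.degree < (k : ℕ) →
        ∫ y in (x j.castSucc)..(x j.succ), ((p j).eval y - u y) * w.eval y = 0) ∧
      (∀ j : Fin N,
        θ * (p j).eval (x j.succ) + (1 - θ) * (p (j + 1)).eval (x (j + 1).castSucc)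
          = θ * u (x j.succ) + (1 - θ) * u (x (j + 1).castSucc)) := by
  have hcell (j : Fin N) : x j.castSucc < x j.succ := hx j.castSucc_lt_succ
  have hsolves (p : Fin N → degreeLT ℝ (k + 1)) :=
    gaussRadauData_eq_iff (k := k) (θ := θ) (a := fun j => x j.castSucc) (b := fun j => x j.succ)
      (F := fun j => (p j : ℝ[X]).eval) (G := fun _ => u) (fun j => (p j : ℝ[X]).continuous)
      (fun _ => hu)
  obtain ⟨P, hP⟩ := (gaussRadauMap_bijective hcell hθ).2 (gaussRadauData k θ _ _ fun _ => u)
  refine ⟨fun j => P j, ⟨fun j => mem_degreeLT_add_one_iff.1 (P j).2, (hsolves P).1 hP⟩, ?_⟩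
  rintro p ⟨hdeg, hsol⟩
  let p' : Fin N → degreeLT ℝ (k + 1) := fun j => ⟨p j, mem_degreeLT_add_one_iff.2 (hdeg j)⟩
  have hpP : p' = P := (gaussRadauMap_bijective hcell hθ).1 (((hsolves p').2 hsol).trans hP.symm)
  funext j
  exact congrArg Subtype.val (congrFun hpP j)

/-- Existence and uniqueness of the generalized Gauss–Radau projection `Pu` into the broken
polynomial space of degree `≤ k` (represented cellwise), for `θ ≠ 1/2`:
`Pu` is orthogonal on each cell to polynomials of degree `< k` and its generalized trace
`θ·(left value) + (1-θ)·(right value)` matches that of `u` at every (periodically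
identified) node. -/
theorem generalized_gauss_radau_projection_exists_unique
    (N k : ℕ) [NeZero N] (θ : ℝ) (hθ0 : 0 ≤ θ) (hθ1 : θ ≤ 1) (hθ : θ ≠ 1 / 2)
    (x : Fin (N + 1) → ℝ) (hx : StrictMono x) (hx0 : x 0 = 0) (hxN : x (Fin.last N) = 1)
    (u : ℝ → ℝ) (hu : Continuous u) (huper : u 0 = u 1) :
    ∃! p : Fin N → Polynomial ℝ,
      (∀ j : Fin N, (p j).degree ≤ (k : ℕ)) ∧
      (∀ j : Fin N, ∀ w : Polynomial ℝ, w.degree < (k : ℕ) →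
        ∫ y in (x j.castSucc)..(x j.succ), ((p j).eval y - u y) * w.eval y = 0) ∧
      (∀ j : Fin N,
        θ * (p j).eval (x j.succ) + (1 - θ) * (p (j + 1)).eval (x (j + 1).castSucc)
          = θ * u (x j.succ) + (1 - θ) * u (x (j + 1).castSucc)) :=
  generalized_gauss_radau_projection_exists_unique_general N k θ hθ x hx u hu
end

section
/- Let P and Q be the generalized projections onto V_h^k defined by: ∫_{I_j}(Pu − u)w = 0 for all w of degree ≤ k−1 with (Pu)^ = û at each node, and ∫_{I_j}(Qu − u)w = 0 for all w of degree ≤ k with (Qu)^ matching the conjugate-weight flux at each node. Then for smooth periodic r, p, s, q, the LDG bilinear form annihilates the projection errors against all discrete test functions: B(r − Pr, p − Qp, s − Ps, q − Qq; γ_h, ω_h, α_h, β_h) = 0 for all γ_h, ω_h, α_h, β_h ∈ V_h^k. -/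
open Polynomial intervalIntegral

/-- Generalized flux `θ·(left) + (1-θ)·(right)` of the projection error `f − Pf`
at node `j+1/2` (periodic identification). -/
noncomputable def errThetaFlux (N : ℕ) [NeZero N] (θ : ℝ) (x : Fin (N + 1) → ℝ)
    (f : ℝ → ℝ) (P : Fin N → Polynomial ℝ) (j : Fin N) : ℝ :=
  θ * (f (x j.succ) - (P j).eval (x j.succ))
    + (1 - θ) * (f (x (j + 1).castSucc) - (P (j + 1)).eval (x (j + 1).castSucc))

/-- Generalized flux `(1-θ)·(left) + θ·(right)` of the projection error `f − Qf`
at node `j+1/2` (periodic identification). -/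
noncomputable def errCoThetaFlux (N : ℕ) [NeZero N] (θ : ℝ) (x : Fin (N + 1) → ℝ)
    (f : ℝ → ℝ) (P : Fin N → Polynomial ℝ) (j : Fin N) : ℝ :=
  (1 - θ) * (f (x j.succ) - (P j).eval (x j.succ))
    + θ * (f (x (j + 1).castSucc) - (P (j + 1)).eval (x (j + 1).castSucc))

/-- Galerkin orthogonality: the CLDG bilinear form `B` annihilates the projection errors
`(r − Pr, p − Qp, s − Ps, q − Qq)` against all discrete test functions
`(γ, ω, α, β) ∈ (V_h^k)⁴`.  Here `P` is orthogonal per cell to polynomials of degree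
`< k` and matches the flux `θ u⁻ + (1-θ) u⁺`, while `Q` is orthogonal per cell to
polynomials of degree `≤ k` and matches the flux `(1-θ) u⁻ + θ u⁺`. -/
theorem cldg_galerkin_orthogonality
    (N k : ℕ) [NeZero N] (θ : ℝ)
    (x : Fin (N + 1) → ℝ) (hx : StrictMono x)
    (hx0 : x 0 = 0) (hxN : x (Fin.last N) = 1)
    (r p s q : ℝ → ℝ)
    (hr : Continuous r) (hp : Continuous p) (hs : Continuous s) (hq : Continuous q)
    (hrper : r 0 = r 1) (hpper : p 0 = p 1) (hsper : s 0 = s 1) (hqper : q 0 = q 1)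
    (Pr Ps Qp Qq : Fin N → Polynomial ℝ)
    (hPrdeg : ∀ j, (Pr j).degree ≤ (k : ℕ)) (hPsdeg : ∀ j, (Ps j).degree ≤ (k : ℕ))
    (hQpdeg : ∀ j, (Qp j).degree ≤ (k : ℕ)) (hQqdeg : ∀ j, (Qq j).degree ≤ (k : ℕ))
    (hProrth : ∀ j : Fin N, ∀ w : Polynomial ℝ, w.degree < (k : ℕ) →
      ∫ y in (x j.castSucc)..(x j.succ), (r y - (Pr j).eval y) * w.eval y = 0)
    (hPsorth : ∀ j : Fin N, ∀ w : Polynomial ℝ, w.degree < (k : ℕ) →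
      ∫ y in (x j.castSucc)..(x j.succ), (s y - (Ps j).eval y) * w.eval y = 0)
    (hQporth : ∀ j : Fin N, ∀ w : Polynomial ℝ, w.degree ≤ (k : ℕ) →
      ∫ y in (x j.castSucc)..(x j.succ), (p y - (Qp j).eval y) * w.eval y = 0)
    (hQqorth : ∀ j : Fin N, ∀ w : Polynomial ℝ, w.degree ≤ (k : ℕ) →
      ∫ y in (x j.castSucc)..(x j.succ), (q y - (Qq j).eval y) * w.eval y = 0)
    (hPrflux : ∀ j : Fin N, errThetaFlux N θ x r Pr j = 0)
    (hPsflux : ∀ j : Fin N, errThetaFlux N θ x s Ps j = 0)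
    (hQpflux : ∀ j : Fin N, errCoThetaFlux N θ x p Qp j = 0)
    (hQqflux : ∀ j : Fin N, errCoThetaFlux N θ x q Qq j = 0)
    (γ ω α β : Fin N → Polynomial ℝ)
    (hγ : ∀ j, (γ j).degree ≤ (k : ℕ)) (hω : ∀ j, (ω j).degree ≤ (k : ℕ))
    (hα : ∀ j, (α j).degree ≤ (k : ℕ)) (hβ : ∀ j, (β j).degree ≤ (k : ℕ)) :
    ∑ j : Fin N,
      (-(∫ y in (x j.castSucc)..(x j.succ),
            (p y - (Qp j).eval y) * (γ j).derivative.eval y)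
        + (∫ y in (x j.castSucc)..(x j.succ),
            (s y - (Ps j).eval y) * (ω j).derivative.eval y)
        + (∫ y in (x j.castSucc)..(x j.succ),
            (q y - (Qq j).eval y) * (α j).derivative.eval y)
        + (∫ y in (x j.castSucc)..(x j.succ),
            (r y - (Pr j).eval y) * (β j).derivative.eval y)
        + errCoThetaFlux N θ x p Qp j * (γ j).eval (x j.succ)
        - errCoThetaFlux N θ x p Qp (j - 1) * (γ j).eval (x j.castSucc)
        - errThetaFlux N θ x s Ps j * (ω j).eval (x j.succ)
        + errThetaFlux N θ x s Ps (j - 1) * (ω j).eval (x j.castSucc)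
        - errCoThetaFlux N θ x q Qq j * (α j).eval (x j.succ)
        + errCoThetaFlux N θ x q Qq (j - 1) * (α j).eval (x j.castSucc)
        - errThetaFlux N θ x r Pr j * (β j).eval (x j.succ)
        + errThetaFlux N θ x r Pr (j - 1) * (β j).eval (x j.castSucc)) = 0 := by
  have hderiv : ∀ (w : Polynomial ℝ), w.degree ≤ (k : ℕ) →
      w.derivative.degree < (k : ℕ) := by
    intro w hw
    rcases eq_or_ne w 0 with h | h
    · simp only [h, Polynomial.derivative_zero, Polynomial.degree_zero]
      exact WithBot.bot_lt_coe k
    · exact lt_of_lt_of_le (Polynomial.degree_derivative_lt h) hw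
  apply Finset.sum_eq_zero
  intro j _
  rw [hQporth j _ (le_of_lt (hderiv _ (hγ j))),
      hPsorth j _ (hderiv _ (hω j)),
      hQqorth j _ (le_of_lt (hderiv _ (hα j))),
      hProrth j _ (hderiv _ (hβ j)),
      hQpflux j, hQpflux (j - 1), hPsflux j, hPsflux (j - 1),
      hQqflux j, hQqflux (j - 1), hPrflux j, hPrflux (j - 1)]
  ring
end
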